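/- arXiv:2206.14591 — 2 statements merged into one kernel-verified Lean document; each statement's English description precedes it below -/
import Mathlib

section
/- Define φ(η)(w,u,d,y) = g1(d) − g0(d) + (w/h(u))·(y − g1(d)) − ((1−w)/(1−h(u)))·(y − g0(d)) for η = (g1, g0, h). Under the model Y = W·g1⁰(D) + (1−W)·g0⁰(D) + ε with E[ε | W, D, U] = 0, E[W | D, U] = h⁰(U), and h⁰(U), h(U) bounded in (c, 1−c) a.s., the Gateaux derivative d/dr |_{r=0} E[φ(η⁰ + r(η − η⁰))(W,U,D,Y)] equals 0 for any such triple η = (g1, g0, h). -/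
open MeasureTheory ProbabilityTheory Filter Topology Set

/-!
Write `q_r = h⁰ + r (h - h⁰)`. Since `W ∈ {0, 1}`, substituting the model turns the score along
the path into `g1⁰ - g0⁰ + r ψ_r + k_r ε` with `ψ_r = aipwSlope W q_r (g1 - g1⁰) (g0 - g0⁰)` and
`k_r = ipwWeight W q_r`, a function of `(W, D, U)`. As `E[ε | W, D, U] = 0`, the noise term has
mean zero for every `r`, so the expected score is `E[g1⁰ - g0⁰] + r J(r)` with `J(r) = E ψ_r`.
By dominated convergence `J` is continuous at `0`, so the derivative at `0` is `J(0)`. Finally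
`ψ_0` is a function of `(D, U)` times `h⁰(U) - W`, which has mean zero because
`E[W | D, U] = h⁰(U)`.
-/

theorem abs_div_le_div_of_abs_le {a q A δ : ℝ} (ha : |a| ≤ A) (hδ : 0 < δ) (hq : δ ≤ q) :
    |a / q| ≤ A / δ := by
  rw [abs_div, abs_of_pos (hδ.trans_le hq)]
  exact div_le_div₀ ((abs_nonneg a).trans ha) ha hδ hq

theorem add_mul_sub_mem_Icc {a b c r : ℝ} (hc : 0 ≤ c) (ha : a ∈ Icc c (1 - c))
    (hb : b ∈ Icc c (1 - c)) (hr : |r| ≤ c / 2) : a + r * (b - a) ∈ Icc (c / 2) (1 - c / 2) := by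
  obtain ⟨ha₁, ha₂⟩ := ha
  obtain ⟨hb₁, hb₂⟩ := hb
  have hba : |b - a| ≤ 1 := abs_le.2 ⟨by linarith, by linarith⟩
  obtain ⟨h₁, h₂⟩ := abs_le.1 <| (abs_mul r (b - a)).trans_le <|
    (mul_le_of_le_one_right (abs_nonneg r) hba).trans hr
  constructor <;> linarith

theorem hasDerivAt_smul_of_continuousAt_zero {𝕜 F : Type*} [NontriviallyNormedField 𝕜]
    [NormedAddCommGroup F] [NormedSpace 𝕜 F] {J : 𝕜 → F} (hJ : ContinuousAt J 0) :
    HasDerivAt (fun t => t • J t) (J 0) 0 := by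
  rw [hasDerivAt_iff_tendsto_slope_zero]
  refine (hJ.tendsto.mono_left nhdsWithin_le_nhds).congr' ?_
  filter_upwards [self_mem_nhdsWithin] with t ht
  simp [smul_smul, inv_mul_cancel₀ ht]

theorem AEStronglyMeasurable.of_add_mul {Ω : Type*} [MeasurableSpace Ω] {μ : Measure Ω}
    {A k f : Ω → ℝ} (hA : AEStronglyMeasurable A μ) (hk : Measurable k)
    (hk0 : ∀ᵐ ω ∂μ, k ω ≠ 0) (h : AEStronglyMeasurable (fun ω => A ω + k ω * f ω) μ) :
    AEStronglyMeasurable f μ :=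
  ((h.sub hA).mul hk.inv.aestronglyMeasurable).congr <| hk0.mono fun ω hω => by
    simp [mul_comm (k ω), hω]

theorem integral_mul_eq_zero_of_condExp_eq_zero {Ω : Type*} {m m₀ : MeasurableSpace Ω}
    {μ : Measure Ω} [IsFiniteMeasure μ] (hm : m ≤ m₀) {X Z : Ω → ℝ}
    (hX : StronglyMeasurable[m] X) {C : ℝ} (hXC : ∀ᵐ ω ∂μ, ‖X ω‖ ≤ C)
    (hZ : Integrable Z μ) (hZ0 : μ[Z|m] =ᵐ[μ] 0) : ∫ ω, X ω * Z ω ∂μ = 0 :=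
  calc ∫ ω, X ω * Z ω ∂μ = ∫ ω, μ[X * Z|m] ω ∂μ := (integral_condExp hm).symm
    _ = ∫ ω, X ω * μ[Z|m] ω ∂μ :=
      integral_congr_ae (condExp_stronglyMeasurable_mul_of_bound hm hX hZ C hXC)
    _ = 0 := by simp [integral_congr_ae (hZ0.mono fun ω hω => by simp [hω] :
        (fun ω => X ω * μ[Z|m] ω) =ᵐ[μ] 0)]

theorem integral_mul_sub_eq_zero_of_condExp_eq {Ω : Type*} {m m₀ : MeasurableSpace Ω}
    {μ : Measure Ω} [IsFiniteMeasure μ] (hm : m ≤ m₀) {X Z V : Ω → ℝ}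
    (hX : StronglyMeasurable[m] X) {C : ℝ} (hXC : ∀ᵐ ω ∂μ, ‖X ω‖ ≤ C) (hZ : Integrable Z μ)
    (hV : StronglyMeasurable[m] V) (hVi : Integrable V μ) (hZV : μ[Z|m] =ᵐ[μ] V) :
    ∫ ω, X ω * (V ω - Z ω) ∂μ = 0 :=
  integral_mul_eq_zero_of_condExp_eq_zero hm hX hXC (hVi.sub hZ) <|
    (condExp_sub hVi hZ m).trans <| by
      rw [condExp_of_stronglyMeasurable hm hV hVi]
      filter_upwards [hZV] with ω hω
      simp [hω]

theorem hasDerivAt_integral_add_mul_of_condExp_eq_zero {Ω : Type*} {m m₀ : MeasurableSpace Ω}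
    {μ : Measure Ω} [IsFiniteMeasure μ] (hm : m ≤ m₀) {A ε : Ω → ℝ} {ψ k : ℝ → Ω → ℝ}
    {δ Cψ Ck Cε : ℝ} (hδ : 0 < δ) (hA : Integrable A μ)
    (hψ : ∀ r, AEStronglyMeasurable (ψ r) μ) (hψC : ∀ᵐ ω ∂μ, ∀ r, |r| < δ → ‖ψ r ω‖ ≤ Cψ)
    (hψ_cont : ∀ᵐ ω ∂μ, ContinuousAt (fun r => ψ r ω) 0) (hψ0 : ∫ ω, ψ 0 ω ∂μ = 0)
    (hk : ∀ r, StronglyMeasurable[m] (k r)) (hkC : ∀ᵐ ω ∂μ, ∀ r, |r| < δ → ‖k r ω‖ ≤ Ck)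
    (hk0 : ∀ᵐ ω ∂μ, ∀ r, |r| < δ → k r ω ≠ 0) (hεC : ∀ᵐ ω ∂μ, ‖ε ω‖ ≤ Cε)
    (hε : μ[ε|m] =ᵐ[μ] 0) :
    HasDerivAt (fun r => ∫ ω, A ω + r * ψ r ω + k r ω * ε ω ∂μ) 0 0 := by
  have hball : ∀ᶠ r in 𝓝 (0 : ℝ), |r| < δ :=
    (isOpen_lt continuous_abs continuous_const).mem_nhds (by simpa using hδ)
  by_cases hεm : AEStronglyMeasurable ε μ
  · have hεi : Integrable ε μ := .of_bound hεm Cε hεC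
    have hJ : ContinuousAt (fun r => ∫ ω, ψ r ω ∂μ) 0 :=
      continuousAt_of_dominated (.of_forall hψ)
        (hball.mono fun r hr => hψC.mono fun ω hω => hω r hr) (integrable_const Cψ) hψ_cont
    refine ((hasDerivAt_smul_of_continuousAt_zero hJ).const_add (∫ ω, A ω ∂μ)
      |>.congr_of_eventuallyEq ?_).congr_deriv hψ0
    filter_upwards [hball] with r hr
    have hψi : Integrable (ψ r) μ := .of_bound (hψ r) Cψ (hψC.mono fun ω hω => hω r hr)
    have hkC' : ∀ᵐ ω ∂μ, ‖k r ω‖ ≤ Ck := hkC.mono fun ω hω => hω r hr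
    rw [integral_add (f := fun ω => A ω + r * ψ r ω) (hA.add (hψi.const_mul r))
        (hεi.bdd_mul ((hk r).mono hm).aestronglyMeasurable hkC'),
      integral_add hA (hψi.const_mul r), integral_const_mul,
      integral_mul_eq_zero_of_condExp_eq_zero hm (hk r) hkC' hεi hε, add_zero, smul_eq_mul]
  · -- As `k r ≠ 0`, the integrand is not measurable either: the integral is the junk value `0`.
    refine (hasDerivAt_const (0 : ℝ) (0 : ℝ)).congr_of_eventuallyEq ?_
    filter_upwards [hball] with r hr
    refine integral_undef fun hi => hεm ?_
    exact AEStronglyMeasurable.of_add_mul (hA.aestronglyMeasurable.add ((hψ r).const_mul r))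
      ((hk r).mono hm).measurable (hk0.mono fun ω hω => hω r hr) hi.1

noncomputable def ipwWeight (w q : ℝ) : ℝ := w / q - (1 - w) / (1 - q)

noncomputable def aipwSlope (w q d₁ d₀ : ℝ) : ℝ :=
  d₁ * (1 - w / q) - d₀ * (1 - (1 - w) / (1 - q))

theorem aipw_score_path_eq {w e a₁ a₀ b₁ b₀ q r : ℝ} (hw : w = 0 ∨ w = 1) :
    a₁ + r * (b₁ - a₁) - (a₀ + r * (b₀ - a₀))
      + w / q * (w * a₁ + (1 - w) * a₀ + e - (a₁ + r * (b₁ - a₁)))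
      - (1 - w) / (1 - q) * (w * a₁ + (1 - w) * a₀ + e - (a₀ + r * (b₀ - a₀)))
    = a₁ - a₀ + r * aipwSlope w q (b₁ - a₁) (b₀ - a₀) + ipwWeight w q * e := by
  rcases hw with rfl | rfl <;> simp only [aipwSlope, ipwWeight] <;> ring

theorem abs_mul_add_one_sub_mul_le {w a₁ a₀ M : ℝ} (hw : w = 0 ∨ w = 1) (h₁ : |a₁| ≤ M)
    (h₀ : |a₀| ≤ M) : |w * a₁ + (1 - w) * a₀| ≤ M := by
  rcases hw with rfl | rfl <;> simpa

section Propensity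

variable {w q δ : ℝ} (hw : w = 0 ∨ w = 1) (hδ : 0 < δ) (hq : q ∈ Icc δ (1 - δ))
include hw hδ hq

theorem abs_ipwWeight_le : |ipwWeight w q| ≤ 1 / δ := by
  obtain ⟨hq₁, hq₂⟩ := hq
  rcases hw with rfl | rfl
  · simp only [ipwWeight, zero_div, zero_sub, sub_zero, abs_neg]
    exact abs_div_le_div_of_abs_le (by simp) hδ (by linarith)
  · simp only [ipwWeight, sub_self, zero_div, sub_zero]
    exact abs_div_le_div_of_abs_le (by simp) hδ hq₁

theorem ipwWeight_ne_zero : ipwWeight w q ≠ 0 := by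
  obtain ⟨hq₁, hq₂⟩ := hq
  rcases hw with rfl | rfl <;>
    simp only [ipwWeight, zero_div, sub_zero, one_div, zero_sub, sub_self, ne_eq, neg_eq_zero,
      inv_eq_zero] <;> linarith

theorem abs_aipwSlope_le {d₁ d₀ B : ℝ} (h₁ : |d₁| ≤ B) (h₀ : |d₀| ≤ B) :
    |aipwSlope w q d₁ d₀| ≤ 2 * B * (1 + 1 / δ) := by
  obtain ⟨hq₁, hq₂⟩ := hq
  have hw₁ : |w| ≤ 1 := by rcases hw with rfl | rfl <;> simp
  have hw₀ : |1 - w| ≤ 1 := by rcases hw with rfl | rfl <;> simp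
  have hx₁ : |1 - w / q| ≤ 1 + 1 / δ := (abs_sub _ _).trans <| by
    simpa using abs_div_le_div_of_abs_le hw₁ hδ hq₁
  have hx₀ : |1 - (1 - w) / (1 - q)| ≤ 1 + 1 / δ := (abs_sub _ _).trans <| by
    simpa using abs_div_le_div_of_abs_le hw₀ hδ (by linarith)
  have hB : 0 ≤ B := (abs_nonneg _).trans h₁
  calc |aipwSlope w q d₁ d₀| ≤ |d₁| * |1 - w / q| + |d₀| * |1 - (1 - w) / (1 - q)| := by
        simpa only [aipwSlope, abs_mul] using
          abs_sub (d₁ * (1 - w / q)) (d₀ * (1 - (1 - w) / (1 - q)))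
    _ ≤ B * (1 + 1 / δ) + B * (1 + 1 / δ) := by gcongr
    _ = 2 * B * (1 + 1 / δ) := by ring

end Propensity

theorem aipwSlope_eq_mul_sub {w a d₁ d₀ : ℝ} (ha₀ : a ≠ 0) (ha₁ : 1 - a ≠ 0) :
    aipwSlope w a d₁ d₀ = (d₁ / a + d₀ / (1 - a)) * (a - w) := by
  simp only [aipwSlope]
  field_simp
  ring

theorem continuousAt_aipwSlope {w a b d₁ d₀ : ℝ} (ha₀ : a ≠ 0) (ha₁ : 1 - a ≠ 0) :
    ContinuousAt (fun r => aipwSlope w (a + r * (b - a)) d₁ d₀) 0 := by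
  simp only [aipwSlope]
  fun_prop (disch := simpa)

theorem integral_aipwSlope_eq_zero {Ω : Type*} {m m₀ : MeasurableSpace Ω} {μ : Measure Ω}
    [IsFiniteMeasure μ] (hm : m ≤ m₀) {W p d₁ d₀ : Ω → ℝ} {c B : ℝ} (hc : 0 < c)
    (hp : StronglyMeasurable[m] p) (hd₁ : StronglyMeasurable[m] d₁)
    (hd₀ : StronglyMeasurable[m] d₀) (hpc : ∀ᵐ ω ∂μ, p ω ∈ Icc c (1 - c))
    (hd : ∀ᵐ ω ∂μ, |d₁ ω| ≤ B ∧ |d₀ ω| ≤ B) (hW : Integrable W μ) (hWp : μ[W|m] =ᵐ[μ] p) :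
    ∫ ω, aipwSlope (W ω) (p ω) (d₁ ω) (d₀ ω) ∂μ = 0 := by
  have hX : StronglyMeasurable[m] fun ω => d₁ ω / p ω + d₀ ω / (1 - p ω) :=
    ((hd₁.measurable.div hp.measurable).add
      (hd₀.measurable.div (measurable_const.sub hp.measurable))).stronglyMeasurable
  have hXB : ∀ᵐ ω ∂μ, ‖d₁ ω / p ω + d₀ ω / (1 - p ω)‖ ≤ B / c + B / c := by
    filter_upwards [hpc, hd] with ω ⟨hp₁, hp₂⟩ ⟨hd₁ω, hd₀ω⟩
    exact (abs_add_le _ _).trans (add_le_add (abs_div_le_div_of_abs_le hd₁ω hc hp₁)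
      (abs_div_le_div_of_abs_le hd₀ω hc (by linarith)))
  have hpi : Integrable p μ := .of_bound (hp.mono hm).aestronglyMeasurable 1 <| by
    filter_upwards [hpc] with ω ⟨hp₁, hp₂⟩
    exact abs_le.2 ⟨by linarith, by linarith⟩
  rw [← integral_mul_sub_eq_zero_of_condExp_eq hm hX hXB hW hp hpi hWp]
  refine integral_congr_ae ?_
  filter_upwards [hpc] with ω ⟨hp₁, hp₂⟩
  exact aipwSlope_eq_mul_sub (by linarith) (by linarith)

theorem hasDerivAt_integral_aipw_path {Ω : Type*} {m' m m₀ : MeasurableSpace Ω}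
    {μ : Measure Ω} [IsFiniteMeasure μ] (hm' : m' ≤ m) (hm : m ≤ m₀)
    {W ε a₁ a₀ b₁ b₀ p₀ p : Ω → ℝ} {c B Cε : ℝ} (hc : 0 < c) (hW : Measurable[m] W)
    (hW01 : ∀ ω, W ω = 0 ∨ W ω = 1) (ha₁ : Measurable[m'] a₁) (ha₀ : Measurable[m'] a₀)
    (hb₁ : Measurable[m'] b₁) (hb₀ : Measurable[m'] b₀) (hp₀ : Measurable[m'] p₀)
    (hp : Measurable[m'] p) (hp₀c : ∀ᵐ ω ∂μ, p₀ ω ∈ Icc c (1 - c))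
    (hpc : ∀ᵐ ω ∂μ, p ω ∈ Icc c (1 - c))
    (hB : ∀ᵐ ω ∂μ, |a₁ ω| ≤ B ∧ |a₀ ω| ≤ B ∧ |b₁ ω| ≤ B ∧ |b₀ ω| ≤ B)
    (hεC : ∀ᵐ ω ∂μ, |ε ω| ≤ Cε) (hε : μ[ε|m] =ᵐ[μ] 0) (hWp : μ[W|m'] =ᵐ[μ] p₀) :
    HasDerivAt (fun r => ∫ ω, a₁ ω - a₀ ω
      + r * aipwSlope (W ω) (p₀ ω + r * (p ω - p₀ ω)) (b₁ ω - a₁ ω) (b₀ ω - a₀ ω)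
      + ipwWeight (W ω) (p₀ ω + r * (p ω - p₀ ω)) * ε ω ∂μ) 0 0 := by
  have ha₁' := ha₁.mono hm' le_rfl
  have ha₀' := ha₀.mono hm' le_rfl
  have hb₁' := hb₁.mono hm' le_rfl
  have hb₀' := hb₀.mono hm' le_rfl
  have hp₀' := hp₀.mono hm' le_rfl
  have hp' := hp.mono hm' le_rfl
  have hpath : ∀ᵐ ω ∂μ, ∀ r : ℝ, |r| < c / 2 →
      p₀ ω + r * (p ω - p₀ ω) ∈ Icc (c / 2) (1 - c / 2) := by
    filter_upwards [hp₀c, hpc] with ω hp₀ω hpω r hr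
    exact add_mul_sub_mem_Icc hc.le hp₀ω hpω hr.le
  have hΔ : ∀ᵐ ω ∂μ, |b₁ ω - a₁ ω| ≤ B + B ∧ |b₀ ω - a₀ ω| ≤ B + B := by
    filter_upwards [hB] with ω ⟨ha₁ω, ha₀ω, hb₁ω, hb₀ω⟩
    exact ⟨(abs_sub _ _).trans (add_le_add hb₁ω ha₁ω),
      (abs_sub _ _).trans (add_le_add hb₀ω ha₀ω)⟩
  refine hasDerivAt_integral_add_mul_of_condExp_eq_zero hm (half_pos hc)
    (Cψ := 2 * (B + B) * (1 + 1 / (c / 2))) (Ck := 1 / (c / 2)) ?_ ?_ ?_ ?_ ?_ ?_ ?_ ?_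
    (hεC.mono fun ω hω => (Real.norm_eq_abs _).trans_le hω) hε
  · refine .of_bound ((ha₁'.sub ha₀').mono hm le_rfl).aestronglyMeasurable (B + B) ?_
    filter_upwards [hB] with ω ⟨ha₁ω, ha₀ω, _⟩
    exact (abs_sub _ _).trans (add_le_add ha₁ω ha₀ω)
  · exact fun r =>
      ((by unfold aipwSlope; fun_prop : Measurable[m] _).mono hm le_rfl).aestronglyMeasurable
  · filter_upwards [hpath, hΔ] with ω hq hΔω r hr
    exact abs_aipwSlope_le (hW01 ω) (half_pos hc) (hq r hr) hΔω.1 hΔω.2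
  · filter_upwards [hp₀c] with ω ⟨h₁, h₂⟩
    exact continuousAt_aipwSlope (by linarith) (by linarith)
  · simp only [zero_mul, add_zero]
    exact integral_aipwSlope_eq_zero (hm'.trans hm) hc hp₀.stronglyMeasurable
      (hb₁.sub ha₁).stronglyMeasurable (hb₀.sub ha₀).stronglyMeasurable hp₀c hΔ
      (.of_bound (hW.mono hm le_rfl).aestronglyMeasurable 1 (.of_forall fun ω => by
        rcases hW01 ω with hw | hw <;> simp [hw])) hWp
  · exact fun r => (by unfold ipwWeight; fun_prop : Measurable[m] _).stronglyMeasurable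
  · filter_upwards [hpath] with ω hq r hr
    exact abs_ipwWeight_le (hW01 ω) (half_pos hc) (hq r hr)
  · filter_upwards [hpath] with ω hq r hr
    exact ipwWeight_ne_zero (hW01 ω) (half_pos hc) (hq r hr)

theorem aipw_neyman_orthogonality_general
    {Ω : Type*} [MeasurableSpace Ω] {μ : Measure Ω} [IsProbabilityMeasure μ]
    {E F : Type*} [MeasurableSpace E] [MeasurableSpace F]
    (W : Ω → ℝ) (D : Ω → E) (U : Ω → F) (Y ε : Ω → ℝ)
    (g1₀ g0₀ g1 g0 : E → ℝ) (h₀ h : F → ℝ) (c M : ℝ) (hc : 0 < c)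
    (hWmeas : Measurable W) (hDmeas : Measurable D) (hUmeas : Measurable U)
    (hg1₀ : Measurable g1₀) (hg0₀ : Measurable g0₀) (hh₀ : Measurable h₀)
    (hg1 : Measurable g1) (hg0 : Measurable g0) (hh : Measurable h)
    (hW01 : ∀ ω, W ω = 0 ∨ W ω = 1)
    (hmodel : ∀ ω, Y ω = W ω * g1₀ (D ω) + (1 - W ω) * g0₀ (D ω) + ε ω)
    (hεcond : μ[ε | MeasurableSpace.comap (fun ω => (W ω, D ω, U ω)) inferInstance]
      =ᵐ[μ] 0)
    (hWcond : μ[W | MeasurableSpace.comap (fun ω => (D ω, U ω)) inferInstance]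
      =ᵐ[μ] fun ω => h₀ (U ω))
    (hh₀bound : ∀ᵐ ω ∂μ, c ≤ h₀ (U ω) ∧ h₀ (U ω) ≤ 1 - c)
    (hhbound : ∀ᵐ ω ∂μ, c ≤ h (U ω) ∧ h (U ω) ≤ 1 - c)
    (hbdd : ∀ᵐ ω ∂μ, |Y ω| ≤ M ∧ |g1₀ (D ω)| ≤ M ∧ |g0₀ (D ω)| ≤ M ∧
      |g1 (D ω)| ≤ M ∧ |g0 (D ω)| ≤ M) :
    HasDerivAt (fun r : ℝ => ∫ ω,
      ((g1₀ (D ω) + r * (g1 (D ω) - g1₀ (D ω)))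
        - (g0₀ (D ω) + r * (g0 (D ω) - g0₀ (D ω)))
        + (W ω / (h₀ (U ω) + r * (h (U ω) - h₀ (U ω))))
            * (Y ω - (g1₀ (D ω) + r * (g1 (D ω) - g1₀ (D ω))))
        - ((1 - W ω) / (1 - (h₀ (U ω) + r * (h (U ω) - h₀ (U ω)))))
            * (Y ω - (g0₀ (D ω) + r * (g0 (D ω) - g0₀ (D ω))))) ∂μ)
      0 0 := by
  have hWDU := comap_measurable (m := inferInstance) fun ω => (W ω, D ω, U ω)
  have hDU := comap_measurable (m := inferInstance) fun ω => (D ω, U ω)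
  have hDU_le : MeasurableSpace.comap (fun ω => (D ω, U ω)) inferInstance ≤
      MeasurableSpace.comap (fun ω => (W ω, D ω, U ω)) inferInstance :=
    Measurable.comap_le (measurable_snd.comp hWDU)
  simp only [hmodel, aipw_score_path_eq, hW01]
  refine hasDerivAt_integral_aipw_path (B := M) (Cε := M + M) hDU_le
    (hWmeas.prodMk (hDmeas.prodMk hUmeas)).comap_le hc (measurable_fst.comp hWDU) hW01
    ((hg1₀.comp measurable_fst).comp hDU) ((hg0₀.comp measurable_fst).comp hDU)
    ((hg1.comp measurable_fst).comp hDU) ((hg0.comp measurable_fst).comp hDU)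
    ((hh₀.comp measurable_snd).comp hDU) ((hh.comp measurable_snd).comp hDU)
    hh₀bound hhbound ?_ ?_ hεcond hWcond
  · filter_upwards [hbdd] with ω ⟨_, h1₀, h0₀, h1, h0⟩
    exact ⟨h1₀, h0₀, h1, h0⟩
  · filter_upwards [hbdd] with ω ⟨hY, h1₀, h0₀, _⟩
    rw [eq_sub_of_add_eq' (hmodel ω).symm]
    exact (abs_sub _ _).trans (add_le_add hY (abs_mul_add_one_sub_mul_le (hW01 ω) h1₀ h0₀))

/-- Neyman orthogonality of the AIPW score: the Gateaux derivative of the expected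
score along the path `η⁰ + r (η - η⁰)` vanishes at `r = 0`. -/
theorem aipw_neyman_orthogonality
    {Ω : Type*} [MeasurableSpace Ω] {μ : Measure Ω} [IsProbabilityMeasure μ]
    {E F : Type*} [MeasurableSpace E] [MeasurableSpace F]
    (W : Ω → ℝ) (D : Ω → E) (U : Ω → F) (Y ε : Ω → ℝ)
    (g1₀ g0₀ g1 g0 : E → ℝ) (h₀ h : F → ℝ) (c M : ℝ) (hc : 0 < c) (hc2 : c < 1/2)
    (hWmeas : Measurable W) (hDmeas : Measurable D) (hUmeas : Measurable U)
    (hg1₀ : Measurable g1₀) (hg0₀ : Measurable g0₀) (hh₀ : Measurable h₀)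
    (hg1 : Measurable g1) (hg0 : Measurable g0) (hh : Measurable h)
    (hW01 : ∀ ω, W ω = 0 ∨ W ω = 1)
    (hmodel : ∀ ω, Y ω = W ω * g1₀ (D ω) + (1 - W ω) * g0₀ (D ω) + ε ω)
    (hεcond : μ[ε | MeasurableSpace.comap (fun ω => (W ω, D ω, U ω)) inferInstance]
      =ᵐ[μ] 0)
    (hWcond : μ[W | MeasurableSpace.comap (fun ω => (D ω, U ω)) inferInstance]
      =ᵐ[μ] fun ω => h₀ (U ω))
    (hh₀bound : ∀ᵐ ω ∂μ, c ≤ h₀ (U ω) ∧ h₀ (U ω) ≤ 1 - c)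
    (hhbound : ∀ᵐ ω ∂μ, c ≤ h (U ω) ∧ h (U ω) ≤ 1 - c)
    (hbdd : ∀ᵐ ω ∂μ, |Y ω| ≤ M ∧ |g1₀ (D ω)| ≤ M ∧ |g0₀ (D ω)| ≤ M ∧
      |g1 (D ω)| ≤ M ∧ |g0 (D ω)| ≤ M) :
    HasDerivAt (fun r : ℝ => ∫ ω,
      ((g1₀ (D ω) + r * (g1 (D ω) - g1₀ (D ω)))
        - (g0₀ (D ω) + r * (g0 (D ω) - g0₀ (D ω)))
        + (W ω / (h₀ (U ω) + r * (h (U ω) - h₀ (U ω))))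
            * (Y ω - (g1₀ (D ω) + r * (g1 (D ω) - g1₀ (D ω))))
        - ((1 - W ω) / (1 - (h₀ (U ω) + r * (h (U ω) - h₀ (U ω)))))
            * (Y ω - (g0₀ (D ω) + r * (g0 (D ω) - g0₀ (D ω))))) ∂μ)
      0 0 :=
  aipw_neyman_orthogonality_general W D U Y ε g1₀ g0₀ g1 g0 h₀ h c M hc hWmeas hDmeas hUmeas hg1₀
    hg0₀ hh₀ hg1 hg0 hh hW01 hmodel hεcond hWcond hh₀bound hhbound hbdd
end

section
/- With φ as in the Neyman orthogonality setup, for every r ∈ (0,1) the second derivative satisfies | d²/dr² E[φ(η⁰ + r(η − η⁰))(W,U,D,Y)] | ≤ C·( ‖g1(D)−g1⁰(D)‖_{L²} + ‖g0(D)−g0⁰(D)‖_{L²} + ‖h(U)−h⁰(U)‖_{L²} )·‖h(U)−h⁰(U)‖_{L²}, where C is a constant depending only on the a.s. bounds c on h, h⁰ (away from 0 and 1) and a uniform a.s. bound on |Y|, |g0⁰(D)|, |g1⁰(D)|, |g0(D)|, |g1(D)|. -/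
/-!
Along the path `s ↦ η⁰ + s (η - η⁰)` the score is affine in `s` plus two inverse-propensity terms
of the form `k (y - (a + s b)) / (p + s q)`, where `q = h - h⁰`. Such a term has second derivative
`2 k q (b p + q (y - a)) / (p + s q) ^ 3`: the factor `q` appears explicitly, and since
`b p + q (y - a) = b (p + s q) + q (y - (a + s b))` the rest is bounded by `|b| + 2 M |q|` over
`c ^ 3`. The a.e. bounds give integrable dominations of the first two derivatives, so the second
derivative of the expectation is the expectation of the pointwise one, and Cauchy–Schwarz bounds
`E[(|g1 - g1⁰| + |g0 - g0⁰| + |h - h⁰|) |h - h⁰|]` by the product of `L²` norms.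
-/

open MeasureTheory Set Filter Topology
open scoped ENNReal

noncomputable def ipwPath (k p q y a b s : ℝ) : ℝ := k / (p + s * q) * (y - (a + s * b))

noncomputable def ipwPathDeriv (k p q y a b s : ℝ) : ℝ :=
  -(k * (b * p + q * (y - a))) / (p + s * q) ^ 2

noncomputable def ipwPathDeriv2 (k p q y a b s : ℝ) : ℝ :=
  2 * k * q * (b * p + q * (y - a)) / (p + s * q) ^ 3

section IpwPath

variable {k p q y a b s c R : ℝ}

theorem hasDerivAt_ipwPath (hs : p + s * q ≠ 0) :
    HasDerivAt (ipwPath k p q y a b) (ipwPathDeriv k p q y a b s) s := by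
  have hd : HasDerivAt (fun t => p + t * q) q s := (hasDerivAt_mul_const q).const_add p
  have hr : HasDerivAt (fun t => y - (a + t * b)) (-b) s :=
    ((hasDerivAt_mul_const b).const_add a).const_sub y
  refine (((hasDerivAt_const s k).fun_div hd hs).fun_mul hr).congr_deriv ?_
  simp only [ipwPathDeriv]
  field_simp
  ring

theorem hasDerivAt_ipwPathDeriv (hs : p + s * q ≠ 0) :
    HasDerivAt (ipwPathDeriv k p q y a b) (ipwPathDeriv2 k p q y a b s) s := by
  have hd : HasDerivAt (fun t => p + t * q) q s := (hasDerivAt_mul_const q).const_add p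
  refine ((hasDerivAt_const s _).fun_div (hd.fun_pow 2) (pow_ne_zero 2 hs)).congr_deriv ?_
  simp only [ipwPathDeriv2]
  field_simp
  ring

theorem abs_div_le_div_of_le {x d A : ℝ} (hx : |x| ≤ A) (hc : 0 < c) (hd : c ≤ d) :
    |x / d| ≤ A / c := by
  rw [abs_div, abs_of_pos (hc.trans_le hd)]
  exact div_le_div₀ ((abs_nonneg x).trans hx) hx hc hd

theorem abs_div_mul_le {d r : ℝ} (hk : |k| ≤ 1) (hc : 0 < c) (hd : c ≤ d) (hr : |r| ≤ R) :
    |k / d * r| ≤ R / c := by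
  rw [div_mul_eq_mul_div]
  refine abs_div_le_div_of_le ?_ hc hd
  rw [abs_mul]
  simpa using mul_le_mul hk hr (abs_nonneg r) zero_le_one

theorem abs_mul_ipw_numerator_le (hk : |k| ≤ 1) (hd : p + s * q ∈ Icc 0 1)
    (hres : |y - (a + s * b)| ≤ R) :
    |k * (b * p + q * (y - a))| ≤ |b| + |q| * R := by
  have hN : b * p + q * (y - a) = b * (p + s * q) + q * (y - (a + s * b)) := by ring
  have hd' : |p + s * q| ≤ 1 := abs_le.2 ⟨by linarith [hd.1], hd.2⟩
  calc |k * (b * p + q * (y - a))|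
      = |k| * |b * (p + s * q) + q * (y - (a + s * b))| := by rw [abs_mul, hN]
    _ ≤ 1 * (|b| * 1 + |q| * R) := by
        refine mul_le_mul hk ((abs_add_le _ _).trans ?_) (abs_nonneg _) zero_le_one
        rw [abs_mul, abs_mul]
        gcongr
    _ = |b| + |q| * R := by ring

theorem abs_ipwPathDeriv_le (hk : |k| ≤ 1) (hc : 0 < c) (hd : p + s * q ∈ Icc c 1)
    (hres : |y - (a + s * b)| ≤ R) :
    |ipwPathDeriv k p q y a b s| ≤ (|b| + |q| * R) / c ^ 2 := by
  rw [ipwPathDeriv, neg_div, abs_neg]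
  exact abs_div_le_div_of_le
    (abs_mul_ipw_numerator_le hk ⟨hc.le.trans hd.1, hd.2⟩ hres) (by positivity)
    (pow_le_pow_left₀ hc.le hd.1 2)

theorem abs_ipwPathDeriv2_le (hk : |k| ≤ 1) (hc : 0 < c) (hd : p + s * q ∈ Icc c 1)
    (hres : |y - (a + s * b)| ≤ R) :
    |ipwPathDeriv2 k p q y a b s| ≤ 2 * |q| * (|b| + |q| * R) / c ^ 3 := by
  have hN := abs_mul_ipw_numerator_le hk ⟨hc.le.trans hd.1, hd.2⟩ hres
  rw [ipwPathDeriv2, show 2 * k * q * (b * p + q * (y - a))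
    = 2 * q * (k * (b * p + q * (y - a))) by ring]
  refine abs_div_le_div_of_le ?_ (by positivity) (pow_le_pow_left₀ hc.le hd.1 3)
  rw [abs_mul, abs_mul, abs_two]
  gcongr

end IpwPath

-- `g₁`, `g₀`, `e` stand for the values `g1(D)`, `g0(D)`, `h(U)`.
noncomputable def aipwScore (w y g₁ g₀ e : ℝ) : ℝ :=
  g₁ - g₀ + w / e * (y - g₁) - (1 - w) / (1 - e) * (y - g₀)

-- The control term is the treated one with `w, p, q` replaced by `1 - w, 1 - p, -q`.
noncomputable def aipwPathDeriv (w y a₁ b₁ a₀ b₀ p q s : ℝ) : ℝ :=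
  b₁ - b₀ + ipwPathDeriv w p q y a₁ b₁ s - ipwPathDeriv (1 - w) (1 - p) (-q) y a₀ b₀ s

noncomputable def aipwPathDeriv2 (w y a₁ b₁ a₀ b₀ p q s : ℝ) : ℝ :=
  ipwPathDeriv2 w p q y a₁ b₁ s - ipwPathDeriv2 (1 - w) (1 - p) (-q) y a₀ b₀ s

structure AipwBounded (c M w y g₁ g₀ e : ℝ) : Prop where
  weight_mem : w ∈ Icc 0 1
  abs_outcome_le : |y| ≤ M
  abs_g₁_le : |g₁| ≤ M
  abs_g₀_le : |g₀| ≤ M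
  propensity_mem : e ∈ Icc c (1 - c)

namespace AipwBounded

variable {c M w y g₁ g₀ e : ℝ}

theorem abs_weight_le (h : AipwBounded c M w y g₁ g₀ e) : |w| ≤ 1 :=
  abs_le.2 ⟨by linarith [h.weight_mem.1], h.weight_mem.2⟩

theorem abs_one_sub_weight_le (h : AipwBounded c M w y g₁ g₀ e) : |1 - w| ≤ 1 :=
  abs_le.2 ⟨by linarith [h.weight_mem.2], by linarith [h.weight_mem.1]⟩

theorem abs_sub_g₁_le (h : AipwBounded c M w y g₁ g₀ e) : |y - g₁| ≤ 2 * M := by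
  linarith [abs_sub y g₁, h.abs_outcome_le, h.abs_g₁_le]

theorem abs_sub_g₀_le (h : AipwBounded c M w y g₁ g₀ e) : |y - g₀| ≤ 2 * M := by
  linarith [abs_sub y g₀, h.abs_outcome_le, h.abs_g₀_le]

theorem abs_propensity_le (h : AipwBounded c M w y g₁ g₀ e) (hc : 0 ≤ c) : |e| ≤ 1 :=
  abs_le.2 ⟨by linarith [h.propensity_mem.1], by linarith [h.propensity_mem.2]⟩

theorem propensity_ne_zero (h : AipwBounded c M w y g₁ g₀ e) (hc : 0 < c) : e ≠ 0 :=
  (hc.trans_le h.propensity_mem.1).ne'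

theorem one_sub_propensity_ne_zero (h : AipwBounded c M w y g₁ g₀ e) (hc : 0 < c) : 1 - e ≠ 0 := by
  linarith [h.propensity_mem.2]

theorem nonneg (h : AipwBounded c M w y g₁ g₀ e) : 0 ≤ M :=
  (abs_nonneg y).trans h.abs_outcome_le

theorem add_mul_sub {g₁' g₀' e' s : ℝ} (h : AipwBounded c M w y g₁ g₀ e)
    (h' : AipwBounded c M w y g₁' g₀' e') (hs : s ∈ Icc (0 : ℝ) 1) :
    AipwBounded c M w y (g₁ + s * (g₁' - g₁)) (g₀ + s * (g₀' - g₀)) (e + s * (e' - e)) := by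
  have segment {l u x x' : ℝ} (hx : x ∈ Icc l u) (hx' : x' ∈ Icc l u) :
      x + s * (x' - x) ∈ Icc l u := (convex_Icc l u).add_smul_sub_mem hx hx' hs
  refine ⟨h.weight_mem, h.abs_outcome_le, ?_, ?_, segment h.propensity_mem h'.propensity_mem⟩
  · exact abs_le.2 (segment (abs_le.1 h.abs_g₁_le) (abs_le.1 h'.abs_g₁_le))
  · exact abs_le.2 (segment (abs_le.1 h.abs_g₀_le) (abs_le.1 h'.abs_g₀_le))

end AipwBounded

section AipwPath

variable {c M w y a₁ b₁ a₀ b₀ p q s : ℝ}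

theorem abs_aipwScore_le {g₁ g₀ e : ℝ} (h : AipwBounded c M w y g₁ g₀ e) (hc : 0 < c) :
    |aipwScore w y g₁ g₀ e| ≤ 2 * M + 2 * M / c + 2 * M / c := by
  have h₁ := abs_div_mul_le h.abs_weight_le hc h.propensity_mem.1 h.abs_sub_g₁_le
  have h₀ := abs_div_mul_le h.abs_one_sub_weight_le hc
    (by linarith [h.propensity_mem.2] : c ≤ 1 - e) h.abs_sub_g₀_le
  rw [aipwScore]
  linarith [h.abs_g₁_le, h.abs_g₀_le, abs_sub g₁ g₀, abs_add_le (g₁ - g₀) (w / e * (y - g₁)),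
    abs_sub (g₁ - g₀ + w / e * (y - g₁)) ((1 - w) / (1 - e) * (y - g₀))]

theorem aipwScore_path_eq :
    aipwScore w y (a₁ + s * b₁) (a₀ + s * b₀) (p + s * q)
      = a₁ + s * b₁ - (a₀ + s * b₀) + ipwPath w p q y a₁ b₁ s
        - ipwPath (1 - w) (1 - p) (-q) y a₀ b₀ s := by
  simp only [aipwScore, ipwPath]
  ring

theorem hasDerivAt_aipwScore_path (h₁ : p + s * q ≠ 0) (h₀ : 1 - (p + s * q) ≠ 0) :
    HasDerivAt (fun t => aipwScore w y (a₁ + t * b₁) (a₀ + t * b₀) (p + t * q))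
      (aipwPathDeriv w y a₁ b₁ a₀ b₀ p q s) s := by
  have h₀' : 1 - p + s * -q ≠ 0 := by convert h₀ using 1; ring
  simp only [aipwScore_path_eq]
  exact ((((hasDerivAt_mul_const b₁).const_add a₁).sub ((hasDerivAt_mul_const b₀).const_add a₀)).add
    (hasDerivAt_ipwPath h₁)).sub (hasDerivAt_ipwPath h₀')

theorem hasDerivAt_aipwPathDeriv (h₁ : p + s * q ≠ 0) (h₀ : 1 - (p + s * q) ≠ 0) :
    HasDerivAt (aipwPathDeriv w y a₁ b₁ a₀ b₀ p q) (aipwPathDeriv2 w y a₁ b₁ a₀ b₀ p q s) s := by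
  have h₀' : 1 - p + s * -q ≠ 0 := by convert h₀ using 1; ring
  exact ((hasDerivAt_ipwPathDeriv h₁).const_add (b₁ - b₀)).fun_sub (hasDerivAt_ipwPathDeriv h₀')

theorem AipwBounded.path_mem_Icc (h : AipwBounded c M w y (a₁ + s * b₁) (a₀ + s * b₀) (p + s * q))
    (hc : 0 < c) : p + s * q ∈ Icc c 1 ∧ 1 - p + s * -q ∈ Icc c 1 := by
  obtain ⟨hl, hu⟩ := h.propensity_mem
  rw [show 1 - p + s * -q = 1 - (p + s * q) by ring]
  exact ⟨⟨hl, by linarith⟩, ⟨by linarith, by linarith⟩⟩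

theorem abs_aipwPathDeriv_le
    (h : AipwBounded c M w y (a₁ + s * b₁) (a₀ + s * b₀) (p + s * q)) (hc : 0 < c) :
    |aipwPathDeriv w y a₁ b₁ a₀ b₀ p q s|
      ≤ (1 + 1 / c ^ 2) * (1 + 4 * M) * (|b₁| + |b₀| + |q|) := by
  obtain ⟨hd₁, hd₀⟩ := h.path_mem_Icc hc
  have e₁ := abs_ipwPathDeriv_le h.abs_weight_le hc hd₁ h.abs_sub_g₁_le
  have e₀ := abs_ipwPathDeriv_le h.abs_one_sub_weight_le hc hd₀ h.abs_sub_g₀_le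
  rw [abs_neg] at e₀
  have hM := h.nonneg
  have hB : |b₁| + |b₀| ≤ (1 + 4 * M) * (|b₁| + |b₀| + |q|) := by
    nlinarith [abs_nonneg b₁, abs_nonneg b₀, abs_nonneg q]
  have hH : |b₁| + |b₀| + 4 * M * |q| ≤ (1 + 4 * M) * (|b₁| + |b₀| + |q|) := by
    nlinarith [abs_nonneg b₁, abs_nonneg b₀, abs_nonneg q]
  rw [aipwPathDeriv]
  calc _ ≤ |b₁| + |b₀| + (|b₁| + |q| * (2 * M)) / c ^ 2 + (|b₀| + |q| * (2 * M)) / c ^ 2 := by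
        linarith [abs_sub b₁ b₀, abs_sub (b₁ - b₀ + ipwPathDeriv w p q y a₁ b₁ s)
          (ipwPathDeriv (1 - w) (1 - p) (-q) y a₀ b₀ s),
          abs_add_le (b₁ - b₀) (ipwPathDeriv w p q y a₁ b₁ s)]
    _ = |b₁| + |b₀| + (|b₁| + |b₀| + 4 * M * |q|) / c ^ 2 := by ring
    _ ≤ (1 + 4 * M) * (|b₁| + |b₀| + |q|) + (1 + 4 * M) * (|b₁| + |b₀| + |q|) / c ^ 2 := by
        gcongr
    _ = _ := by ring

theorem abs_aipwPathDeriv2_le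
    (h : AipwBounded c M w y (a₁ + s * b₁) (a₀ + s * b₀) (p + s * q)) (hc : 0 < c) :
    |aipwPathDeriv2 w y a₁ b₁ a₀ b₀ p q s|
      ≤ 2 / c ^ 3 * (1 + 4 * M) * ((|b₁| + |b₀| + |q|) * |q|) := by
  obtain ⟨hd₁, hd₀⟩ := h.path_mem_Icc hc
  have e₁ := abs_ipwPathDeriv2_le h.abs_weight_le hc hd₁ h.abs_sub_g₁_le
  have e₀ := abs_ipwPathDeriv2_le h.abs_one_sub_weight_le hc hd₀ h.abs_sub_g₀_le
  rw [abs_neg] at e₀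
  have hH : |b₁| + |b₀| + 4 * M * |q| ≤ (1 + 4 * M) * (|b₁| + |b₀| + |q|) := by
    nlinarith [h.nonneg, abs_nonneg b₁, abs_nonneg b₀, abs_nonneg q]
  rw [aipwPathDeriv2]
  calc _ ≤ 2 * |q| * (|b₁| + |q| * (2 * M)) / c ^ 3
        + 2 * |q| * (|b₀| + |q| * (2 * M)) / c ^ 3 := (abs_sub _ _).trans (add_le_add e₁ e₀)
    _ = 2 / c ^ 3 * (|b₁| + |b₀| + 4 * M * |q|) * |q| := by ring
    _ ≤ 2 / c ^ 3 * ((1 + 4 * M) * (|b₁| + |b₀| + |q|)) * |q| := by gcongr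
    _ = _ := by ring

end AipwPath

section

variable {Ω E : Type*} [MeasurableSpace Ω] {μ : Measure Ω}
  [NormedAddCommGroup E] [NormedSpace ℝ E]

theorem deriv_deriv_integral_eq_integral {S : Set ℝ} (hS : IsOpen S) {x : ℝ} (hx : x ∈ S)
    {F F' F'' : ℝ → Ω → E} {bound' bound'' : Ω → ℝ}
    (hF_int : ∀ t ∈ S, Integrable (F t) μ) (hF'_meas : ∀ t ∈ S, AEStronglyMeasurable (F' t) μ)
    (hF''_meas : AEStronglyMeasurable (F'' x) μ)
    (h_bound' : ∀ᵐ ω ∂μ, ∀ t ∈ S, ‖F' t ω‖ ≤ bound' ω) (h_int' : Integrable bound' μ)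
    (h_bound'' : ∀ᵐ ω ∂μ, ∀ t ∈ S, ‖F'' t ω‖ ≤ bound'' ω) (h_int'' : Integrable bound'' μ)
    (h_diff : ∀ᵐ ω ∂μ, ∀ t ∈ S, HasDerivAt (F · ω) (F' t ω) t)
    (h_diff' : ∀ᵐ ω ∂μ, ∀ t ∈ S, HasDerivAt (F' · ω) (F'' t ω) t) :
    deriv (deriv fun t => ∫ ω, F t ω ∂μ) x = ∫ ω, F'' x ω ∂μ := by
  have first (t : ℝ) (ht : t ∈ S) := hasDerivAt_integral_of_dominated_loc_of_deriv_le
    (hS.mem_nhds ht) (eventually_of_mem (hS.mem_nhds ht) fun t ht => (hF_int t ht).1)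
    (hF_int t ht) (hF'_meas t ht) h_bound' h_int' h_diff
  have hderiv : deriv (fun t => ∫ ω, F t ω ∂μ) =ᶠ[𝓝 x] fun t => ∫ ω, F' t ω ∂μ :=
    eventually_of_mem (hS.mem_nhds hx) fun t ht => (first t ht).2.deriv
  rw [hderiv.deriv_eq]
  exact (hasDerivAt_integral_of_dominated_loc_of_deriv_le (hS.mem_nhds hx)
    (eventually_of_mem (hS.mem_nhds hx) fun t ht => (first t ht).1.1) (first x hx).1
    hF''_meas h_bound'' h_int'' h_diff').2.deriv

end

section

variable {Ω : Type*} [MeasurableSpace Ω] {μ : Measure Ω} {f g : Ω → ℝ}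

theorem integral_mul_le_toReal_eLpNorm_mul (hf : MemLp f 2 μ) (hg : MemLp g 2 μ) :
    ∫ ω, f ω * g ω ∂μ ≤ (eLpNorm f 2 μ).toReal * (eLpNorm g 2 μ).toReal := by
  have holder : eLpNorm (fun ω => f ω * g ω) 1 μ ≤ eLpNorm f 2 μ * eLpNorm g 2 μ := by
    simpa using eLpNorm_le_eLpNorm_mul_eLpNorm'_of_norm (p := 2) (q := 2) (r := 1) hf.1 hg.1
      (· * ·) 1 (ae_of_all _ fun ω => by simp [norm_mul])
  have hfg : AEStronglyMeasurable (fun ω => f ω * g ω) μ := hf.1.mul hg.1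
  calc ∫ ω, f ω * g ω ∂μ ≤ ∫ ω, ‖f ω * g ω‖ ∂μ :=
        (Real.le_norm_self _).trans (norm_integral_le_integral_norm _)
    _ = (eLpNorm (fun ω => f ω * g ω) 1 μ).toReal := by
        rw [toReal_eLpNorm hfg, lpNorm_one_eq_integral_norm hfg]
    _ ≤ (eLpNorm f 2 μ * eLpNorm g 2 μ).toReal :=
        ENNReal.toReal_mono (ENNReal.mul_ne_top hf.2.ne hg.2.ne) holder
    _ = _ := ENNReal.toReal_mul

theorem eLpNorm_abs (f : Ω → ℝ) (p : ℝ≥0∞) (μ : Measure Ω) :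
    eLpNorm (fun ω => |f ω|) p μ = eLpNorm f p μ :=
  eLpNorm_norm f

theorem toReal_eLpNorm_add_le {p : ℝ≥0∞} (hf : MemLp f p μ) (hg : MemLp g p μ) (hp : 1 ≤ p) :
    (eLpNorm (f + g) p μ).toReal ≤ (eLpNorm f p μ).toReal + (eLpNorm g p μ).toReal := by
  simpa only [toReal_eLpNorm, hf.1, hg.1, hf.1.add hg.1] using lpNorm_add_le hf hp (g := g)

theorem toReal_eLpNorm_abs_add_abs_add_abs_le {p : ℝ≥0∞} {h : Ω → ℝ} (hf : MemLp f p μ)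
    (hg : MemLp g p μ) (hh : MemLp h p μ) (hp : 1 ≤ p) :
    (eLpNorm (fun ω => |f ω| + |g ω| + |h ω|) p μ).toReal
      ≤ (eLpNorm f p μ).toReal + (eLpNorm g p μ).toReal + (eLpNorm h p μ).toReal := by
  calc _ ≤ (eLpNorm (fun ω => |f ω| + |g ω|) p μ).toReal + (eLpNorm (fun ω => |h ω|) p μ).toReal :=
        toReal_eLpNorm_add_le (hf.norm.add hg.norm) hh.norm hp
    _ ≤ (eLpNorm (fun ω => |f ω|) p μ).toReal + (eLpNorm (fun ω => |g ω|) p μ).toReal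
        + (eLpNorm (fun ω => |h ω|) p μ).toReal := by
        gcongr
        exact toReal_eLpNorm_add_le hf.norm hg.norm hp
    _ = _ := by simp only [eLpNorm_abs]

end

section

variable {Ω : Type*} [MeasurableSpace Ω] {μ : Measure Ω} [IsFiniteMeasure μ] {c M : ℝ}

theorem deriv_deriv_integral_aipwScore_path (hc : 0 < c)
    {w y a₁ b₁ a₀ b₀ p q : Ω → ℝ} (hw : Measurable w) (hy : Measurable y)
    (ha₁ : Measurable a₁) (hb₁ : Measurable b₁) (ha₀ : Measurable a₀) (hb₀ : Measurable b₀)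
    (hp : Measurable p) (hq : Measurable q)
    (hb₁L : MemLp b₁ 2 μ) (hb₀L : MemLp b₀ 2 μ) (hqL : MemLp q 2 μ)
    (hbdd : ∀ᵐ ω ∂μ, ∀ s ∈ Icc (0 : ℝ) 1,
      AipwBounded c M (w ω) (y ω) (a₁ ω + s * b₁ ω) (a₀ ω + s * b₀ ω) (p ω + s * q ω))
    {r : ℝ} (hr : r ∈ Ioo 0 1) :
    deriv (deriv fun s => ∫ ω, aipwScore (w ω) (y ω) (a₁ ω + s * b₁ ω) (a₀ ω + s * b₀ ω)
        (p ω + s * q ω) ∂μ) r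
      = ∫ ω, aipwPathDeriv2 (w ω) (y ω) (a₁ ω) (b₁ ω) (a₀ ω) (b₀ ω) (p ω) (q ω) r ∂μ := by
  have hS : Ioo (0 : ℝ) 1 ⊆ Icc 0 1 := Ioo_subset_Icc_self
  have hG : MemLp (fun ω => |b₁ ω| + |b₀ ω| + |q ω|) 2 μ :=
    (hb₁L.norm.add hb₀L.norm).add hqL.norm
  refine deriv_deriv_integral_eq_integral isOpen_Ioo hr
    (bound' := fun ω => (1 + 1 / c ^ 2) * (1 + 4 * M) * (|b₁ ω| + |b₀ ω| + |q ω|))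
    (bound'' := fun ω => 2 / c ^ 3 * (1 + 4 * M) * ((|b₁ ω| + |b₀ ω| + |q ω|) * |q ω|))
    (fun t ht => Integrable.of_bound (by unfold aipwScore; fun_prop) _
      (hbdd.mono fun ω h => abs_aipwScore_le (h t (hS ht)) hc))
    (fun t _ => by unfold aipwPathDeriv ipwPathDeriv; fun_prop)
    (by unfold aipwPathDeriv2 ipwPathDeriv2; fun_prop)
    (hbdd.mono fun ω h t ht => abs_aipwPathDeriv_le (h t (hS ht)) hc)
    ((hG.integrable one_le_two).const_mul _)
    (hbdd.mono fun ω h t ht => abs_aipwPathDeriv2_le (h t (hS ht)) hc)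
    ((hG.integrable_mul hqL.norm).const_mul _)
    (hbdd.mono fun ω h t ht => hasDerivAt_aipwScore_path
      ((h t (hS ht)).propensity_ne_zero hc) ((h t (hS ht)).one_sub_propensity_ne_zero hc))
    (hbdd.mono fun ω h t ht => hasDerivAt_aipwPathDeriv
      ((h t (hS ht)).propensity_ne_zero hc) ((h t (hS ht)).one_sub_propensity_ne_zero hc))

theorem abs_deriv_deriv_integral_aipwScore_le (hc : 0 < c) (hM : 0 ≤ M)
    {w y a₁ a₀ p a₁' a₀' p' : Ω → ℝ} (hw : Measurable w) (hy : Measurable y)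
    (ha₁ : Measurable a₁) (ha₀ : Measurable a₀) (hp : Measurable p)
    (ha₁' : Measurable a₁') (ha₀' : Measurable a₀') (hp' : Measurable p')
    (hbdd : ∀ᵐ ω ∂μ, AipwBounded c M (w ω) (y ω) (a₁ ω) (a₀ ω) (p ω) ∧
      AipwBounded c M (w ω) (y ω) (a₁' ω) (a₀' ω) (p' ω))
    {r : ℝ} (hr : r ∈ Ioo 0 1) :
    |deriv (deriv fun s => ∫ ω, aipwScore (w ω) (y ω) (a₁ ω + s * (a₁' ω - a₁ ω))
        (a₀ ω + s * (a₀' ω - a₀ ω)) (p ω + s * (p' ω - p ω)) ∂μ) r|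
      ≤ 2 / c ^ 3 * (1 + 4 * M) * ((eLpNorm (fun ω => a₁' ω - a₁ ω) 2 μ).toReal
          + (eLpNorm (fun ω => a₀' ω - a₀ ω) 2 μ).toReal
          + (eLpNorm (fun ω => p' ω - p ω) 2 μ).toReal)
        * (eLpNorm (fun ω => p' ω - p ω) 2 μ).toReal := by
  have memLp {f : Ω → ℝ} (hf : Measurable f) {K : ℝ} (hK : ∀ᵐ ω ∂μ, |f ω| ≤ K) : MemLp f 2 μ :=
    MemLp.of_bound hf.aestronglyMeasurable K hK
  have hb₁ : MemLp (fun ω => a₁' ω - a₁ ω) 2 μ :=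
    (memLp ha₁' (hbdd.mono fun _ h => h.2.abs_g₁_le)).sub
      (memLp ha₁ (hbdd.mono fun _ h => h.1.abs_g₁_le))
  have hb₀ : MemLp (fun ω => a₀' ω - a₀ ω) 2 μ :=
    (memLp ha₀' (hbdd.mono fun _ h => h.2.abs_g₀_le)).sub
      (memLp ha₀ (hbdd.mono fun _ h => h.1.abs_g₀_le))
  have hq : MemLp (fun ω => p' ω - p ω) 2 μ :=
    (memLp hp' (hbdd.mono fun _ h => h.2.abs_propensity_le hc.le)).sub
      (memLp hp (hbdd.mono fun _ h => h.1.abs_propensity_le hc.le))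
  have hpath : ∀ᵐ ω ∂μ, ∀ s ∈ Icc (0 : ℝ) 1, AipwBounded c M (w ω) (y ω)
      (a₁ ω + s * (a₁' ω - a₁ ω)) (a₀ ω + s * (a₀' ω - a₀ ω)) (p ω + s * (p' ω - p ω)) :=
    hbdd.mono fun _ h _ hs => h.1.add_mul_sub h.2 hs
  rw [deriv_deriv_integral_aipwScore_path hc hw hy ha₁ (by fun_prop) ha₀ (by fun_prop) hp
    (by fun_prop) hb₁ hb₀ hq hpath hr]
  have hG : MemLp (fun ω => |a₁' ω - a₁ ω| + |a₀' ω - a₀ ω| + |p' ω - p ω|) 2 μ :=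
    (hb₁.norm.add hb₀.norm).add hq.norm
  calc _ ≤ ∫ ω, 2 / c ^ 3 * (1 + 4 * M) * ((|a₁' ω - a₁ ω| + |a₀' ω - a₀ ω| + |p' ω - p ω|)
        * |p' ω - p ω|) ∂μ := by
        rw [← Real.norm_eq_abs]
        exact norm_integral_le_of_norm_le ((hG.integrable_mul hq.norm).const_mul _)
          (hpath.mono fun ω h => abs_aipwPathDeriv2_le (h r (Ioo_subset_Icc_self hr)) hc)
    _ = 2 / c ^ 3 * (1 + 4 * M) * ∫ ω, (|a₁' ω - a₁ ω| + |a₀' ω - a₀ ω| + |p' ω - p ω|)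
        * |p' ω - p ω| ∂μ := integral_const_mul _ _
    _ ≤ 2 / c ^ 3 * (1 + 4 * M) *
        ((eLpNorm (fun ω => |a₁' ω - a₁ ω| + |a₀' ω - a₀ ω| + |p' ω - p ω|) 2 μ).toReal
          * (eLpNorm (fun ω => |p' ω - p ω|) 2 μ).toReal) := by
        gcongr
        exact integral_mul_le_toReal_eLpNorm_mul hG hq.norm
    _ ≤ _ := by
        rw [eLpNorm_abs, mul_assoc _ (_ + _ + _)]
        gcongr
        exact toReal_eLpNorm_abs_add_abs_add_abs_le hb₁ hb₀ hq one_le_two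

end

theorem aipw_second_derivative_product_bound_general (c M : ℝ) (hc : 0 < c)
    (hM : 0 < M) :
    ∃ C : ℝ, 0 < C ∧
      ∀ {Ω : Type} [MeasurableSpace Ω] (μ : Measure Ω) [IsProbabilityMeasure μ]
        {E F : Type} [MeasurableSpace E] [MeasurableSpace F]
        (W : Ω → ℝ) (D : Ω → E) (U : Ω → F) (Y : Ω → ℝ)
        (g1₀ g0₀ g1 g0 : E → ℝ) (h₀ h : F → ℝ),
        Measurable W → Measurable D → Measurable U → Measurable Y →
        Measurable g1₀ → Measurable g0₀ → Measurable h₀ →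
        Measurable g1 → Measurable g0 → Measurable h →
        (∀ ω, W ω = 0 ∨ W ω = 1) →
        (∀ᵐ ω ∂μ, |Y ω| ≤ M ∧ |g1₀ (D ω)| ≤ M ∧ |g0₀ (D ω)| ≤ M ∧
          |g1 (D ω)| ≤ M ∧ |g0 (D ω)| ≤ M) →
        (∀ᵐ ω ∂μ, c ≤ h₀ (U ω) ∧ h₀ (U ω) ≤ 1 - c ∧ c ≤ h (U ω) ∧ h (U ω) ≤ 1 - c) →
        ∀ r ∈ Set.Ioo (0 : ℝ) 1,
          |deriv (deriv (fun s : ℝ => ∫ ω,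
            ((g1₀ (D ω) + s * (g1 (D ω) - g1₀ (D ω)))
              - (g0₀ (D ω) + s * (g0 (D ω) - g0₀ (D ω)))
              + (W ω / (h₀ (U ω) + s * (h (U ω) - h₀ (U ω))))
                  * (Y ω - (g1₀ (D ω) + s * (g1 (D ω) - g1₀ (D ω))))
              - ((1 - W ω) / (1 - (h₀ (U ω) + s * (h (U ω) - h₀ (U ω)))))
                  * (Y ω - (g0₀ (D ω) + s * (g0 (D ω) - g0₀ (D ω))))) ∂μ)) r|
          ≤ C * ((eLpNorm (fun ω => g1 (D ω) - g1₀ (D ω)) 2 μ).toReal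
                + (eLpNorm (fun ω => g0 (D ω) - g0₀ (D ω)) 2 μ).toReal
                + (eLpNorm (fun ω => h (U ω) - h₀ (U ω)) 2 μ).toReal)
              * (eLpNorm (fun ω => h (U ω) - h₀ (U ω)) 2 μ).toReal := by
  refine ⟨2 / c ^ 3 * (1 + 4 * M), by positivity, ?_⟩
  intro Ω _ μ _ E F _ _ W D U Y g1₀ g0₀ g1 g0 h₀ h hW hD hU hY hg1₀ hg0₀ hh₀ hg1 hg0 hh
    hW01 hbd hprop r hr
  have hbdd : ∀ᵐ ω ∂μ, AipwBounded c M (W ω) (Y ω) (g1₀ (D ω)) (g0₀ (D ω)) (h₀ (U ω)) ∧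
      AipwBounded c M (W ω) (Y ω) (g1 (D ω)) (g0 (D ω)) (h (U ω)) := by
    filter_upwards [hbd, hprop] with ω ⟨hYω, h1₀, h0₀, h1, h0⟩ ⟨hl₀, hu₀, hl, hu⟩
    have hWω : W ω ∈ Icc (0 : ℝ) 1 := by rcases hW01 ω with hω | hω <;> simp [hω]
    exact ⟨⟨hWω, hYω, h1₀, h0₀, hl₀, hu₀⟩, ⟨hWω, hYω, h1, h0, hl, hu⟩⟩
  exact abs_deriv_deriv_integral_aipwScore_le hc hM.le hW hY (hg1₀.comp hD) (hg0₀.comp hD)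
    (hh₀.comp hU) (hg1.comp hD) (hg0.comp hD) (hh.comp hU) hbdd hr

/-- Second-order (product) property of the AIPW score: the second derivative of the
expected score along the path `η⁰ + r (η - η⁰)` is bounded by a product of `L²`
estimation errors, with a constant depending only on the bounds `c` and `M`. -/
theorem aipw_second_derivative_product_bound (c M : ℝ) (hc : 0 < c) (hc2 : c < 1/2)
    (hM : 0 < M) :
    ∃ C : ℝ, 0 < C ∧
      ∀ {Ω : Type} [MeasurableSpace Ω] (μ : Measure Ω) [IsProbabilityMeasure μ]
        {E F : Type} [MeasurableSpace E] [MeasurableSpace F]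
        (W : Ω → ℝ) (D : Ω → E) (U : Ω → F) (Y : Ω → ℝ)
        (g1₀ g0₀ g1 g0 : E → ℝ) (h₀ h : F → ℝ),
        Measurable W → Measurable D → Measurable U → Measurable Y →
        Measurable g1₀ → Measurable g0₀ → Measurable h₀ →
        Measurable g1 → Measurable g0 → Measurable h →
        (∀ ω, W ω = 0 ∨ W ω = 1) →
        (∀ᵐ ω ∂μ, |Y ω| ≤ M ∧ |g1₀ (D ω)| ≤ M ∧ |g0₀ (D ω)| ≤ M ∧
          |g1 (D ω)| ≤ M ∧ |g0 (D ω)| ≤ M) →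
        (∀ᵐ ω ∂μ, c ≤ h₀ (U ω) ∧ h₀ (U ω) ≤ 1 - c ∧ c ≤ h (U ω) ∧ h (U ω) ≤ 1 - c) →
        ∀ r ∈ Set.Ioo (0 : ℝ) 1,
          |deriv (deriv (fun s : ℝ => ∫ ω,
            ((g1₀ (D ω) + s * (g1 (D ω) - g1₀ (D ω)))
              - (g0₀ (D ω) + s * (g0 (D ω) - g0₀ (D ω)))
              + (W ω / (h₀ (U ω) + s * (h (U ω) - h₀ (U ω))))
                  * (Y ω - (g1₀ (D ω) + s * (g1 (D ω) - g1₀ (D ω))))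
              - ((1 - W ω) / (1 - (h₀ (U ω) + s * (h (U ω) - h₀ (U ω)))))
                  * (Y ω - (g0₀ (D ω) + s * (g0 (D ω) - g0₀ (D ω))))) ∂μ)) r|
          ≤ C * ((eLpNorm (fun ω => g1 (D ω) - g1₀ (D ω)) 2 μ).toReal
                + (eLpNorm (fun ω => g0 (D ω) - g0₀ (D ω)) 2 μ).toReal
                + (eLpNorm (fun ω => h (U ω) - h₀ (U ω)) 2 μ).toReal)
              * (eLpNorm (fun ω => h (U ω) - h₀ (U ω)) 2 μ).toReal :=
  aipw_second_derivative_product_bound_general c M hc hM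
end
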